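/- arXiv:1407.5987 — 5 statements merged into one kernel-verified Lean document; each statement's English description precedes it below -/
import Mathlib

section
/- For ℤ×ℤ-graded R-modules M and N, there is a unique R-linear map τ_{M,N} : M⊗_R N → N⊗_R M satisfying τ_{M,N}(m⊗n) = λ(deg m, deg n)·(n⊗m) for all homogeneous m ∈ M and n ∈ N; moreover τ_{M,N} is an isomorphism, with τ_{N,M} ∘ τ_{M,N} = id_{M⊗N}. -/
open scoped TensorProduct

noncomputable section Chrono

/-- The abelian group (ℤ/2)×(ℤ/2)×ℤ. -/
abbrev GG : Type := ZMod 2 × ZMod 2 × ℤ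

/-- The ring R = ℤ[X,Y,Z,Z⁻¹]/(X²−1, Y²−1), realized as the group algebra over ℤ
of the abelian group (ℤ/2)×(ℤ/2)×ℤ. -/
abbrev RR : Type := AddMonoidAlgebra ℤ GG

/-- The unit of `RR` corresponding to a group element of `GG`. -/
def gunit (g : GG) : RRˣ where
  val := AddMonoidAlgebra.single g 1
  inv := AddMonoidAlgebra.single (-g) 1
  val_inv := by simp [AddMonoidAlgebra.single_mul_single, AddMonoidAlgebra.one_def]
  inv_val := by simp [AddMonoidAlgebra.single_mul_single, AddMonoidAlgebra.one_def]

/-- The unit X of R (image of the first generator). -/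
def Xu : RRˣ := gunit (1, 0, 0)
/-- The unit Y of R (image of the second generator). -/
def Yu : RRˣ := gunit (0, 1, 0)
/-- The unit Z of R (image of the third generator). -/
def Zu : RRˣ := gunit (0, 0, 1)

def X : RR := Xu
def Y : RR := Yu
def Z : RR := Zu

/-- ℤ_π = ℤ[π]/(π²−1). -/
abbrev Zpi : Type := Polynomial ℤ ⧸ Ideal.span {(Polynomial.X : Polynomial ℤ) ^ 2 - 1}

/-- The class of π in ℤ_π. -/
def piE : Zpi := Ideal.Quotient.mk _ Polynomial.X

/-- The homogeneous component of degree `(a,b) ∈ (ℤ/2)×ℤ` of the splitting-degree grading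
of `RR`: the ℤ-submodule spanned by the monomials `X^p Y^q Z^r` with `p+q ≡ a (mod 2)`
and `r = -b`. -/
def Rcomp (d : ZMod 2 × ℤ) : Submodule ℤ RR :=
  Submodule.span ℤ {m : RR | ∃ p q r : ℤ,
    ((p + q : ℤ) : ZMod 2) = d.1 ∧ r = -d.2 ∧ m = ((Xu ^ p * Yu ^ q * Zu ^ r : RRˣ) : RR)}

/-- λ((a,b),(a',b')) = X^{aa'} · Y^{bb'} · Z^{ab'−a'b} ∈ Rˣ. -/
def lam (d e : ℤ × ℤ) : RRˣ :=
  Xu ^ (d.1 * e.1) * Yu ^ (d.2 * e.2) * Zu ^ (d.1 * e.2 - e.1 * d.2)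

/-- The free `RR`-module A with basis `v₊ = (1,0)`, `v₋ = (0,1)`. -/
abbrev A : Type := RR × RR

/-- The basis element v₊ of A. -/
def vp : A := (1, 0)
/-- The basis element v₋ of A. -/
def vm : A := (0, 1)

/-- Multiplication μ : A ⊗ A → A, determined by μ(v₊⊗v₊)=v₊, μ(v₊⊗v₋)=v₋,
μ(v₋⊗v₊)=XZ·v₋, μ(v₋⊗v₋)=0. -/
def mu : A ⊗[RR] A →ₗ[RR] A :=
  TensorProduct.lift <| LinearMap.mk₂ RR
    (fun u v => (u.1 * v.1, u.1 * v.2 + (X * Z) * (u.2 * v.1)))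
    (by intros; simp [Prod.ext_iff]; constructor <;> ring)
    (by intros; simp [Prod.ext_iff, smul_eq_mul]; constructor <;> ring)
    (by intros; simp [Prod.ext_iff]; constructor <;> ring)
    (by intros; simp [Prod.ext_iff, smul_eq_mul]; constructor <;> ring)

/-- Comultiplication Δ : A → A ⊗ A, with Δ(v₊) = v₋⊗v₊ + YZ·(v₊⊗v₋) and Δ(v₋) = v₋⊗v₋. -/
def Delta : A →ₗ[RR] A ⊗[RR] A :=
  (LinearMap.fst RR RR RR).smulRight (vm ⊗ₜ[RR] vp + (Y * Z) • (vp ⊗ₜ[RR] vm)) +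
  (LinearMap.snd RR RR RR).smulRight (vm ⊗ₜ[RR] vm)

/-- Counit ε : A → R, ε(v₊)=0, ε(v₋)=1. -/
def eps : A →ₗ[RR] RR := LinearMap.snd RR RR RR

/-- Unit η : R → A, η(1)=v₊. -/
def eta : RR →ₗ[RR] A := (LinearMap.id : RR →ₗ[RR] RR).smulRight vp

/-- The dual basis element v₊* of A* = Hom_R(A,R). -/
def vpd : Module.Dual RR A := LinearMap.fst RR RR RR
/-- The dual basis element v₋* of A* = Hom_R(A,R). -/
def vmd : Module.Dual RR A := LinearMap.snd RR RR RR

/-- The element f ⊗ g of (A⊗A)* under the identification (A⊗A)* ≅ A*⊗A*,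
given by ⟨f⊗g, m⊗n⟩ = f(m)·g(n). -/
def pairF (f g : Module.Dual RR A) : A ⊗[RR] A →ₗ[RR] RR :=
  TensorProduct.lift <| LinearMap.mk₂ RR (fun m n => f m * g n)
    (by intros; simp [add_mul])
    (by intros; simp [smul_eq_mul]; ring)
    (by intros; simp [mul_add])
    (by intros; simp [smul_eq_mul]; ring)
/-- The defining property of the symmetry τ_{M,N} : M⊗N → N⊗M,
τ(m⊗n) = λ(deg m, deg n)·(n⊗m) on homogeneous elements. -/
def IsSymmetryMap {M N : Type}
    [AddCommGroup M] [Module RR M] [AddCommGroup N] [Module RR N]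
    (𝓜 : ℤ × ℤ → Submodule RR M) (𝓝 : ℤ × ℤ → Submodule RR N)
    (τ : M ⊗[RR] N →ₗ[RR] N ⊗[RR] M) : Prop :=
  ∀ d e : ℤ × ℤ, ∀ m ∈ 𝓜 d, ∀ n ∈ 𝓝 e,
    τ (m ⊗ₜ[RR] n) = ((lam d e : RRˣ) : RR) • (n ⊗ₜ[RR] m)


/-! Since `M ≅ ⨁ d, 𝓜 d` and `N ≅ ⨁ e, 𝓝 e`, a family of bilinear maps on the homogeneous
pieces glues to a linear map on `M ⊗ N`, and a linear map on `M ⊗ N` is determined by its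
values on homogeneous pure tensors. This gives existence and uniqueness of the flip twisted by
any scalars `c d e`. Two such flips compose to multiplication by `c d e * c' e d` on `m ⊗ n`,
and `λ(d,e) λ(e,d) = X^{2aa'} Y^{2bb'} Z^0 = 1`. -/

open TensorProduct
open scoped DirectSum

section GradedTensor

variable {R ι M N P : Type*} [CommSemiring R] [DecidableEq ι]
  [AddCommMonoid M] [Module R M] [AddCommMonoid N] [Module R N] [AddCommMonoid P] [Module R P]
  {𝓜 : ι → Submodule R M} {𝓝 : ι → Submodule R N}

theorem DirectSum.IsInternal.symm_ofBijective_coeLinearMap_of_mem (h : DirectSum.IsInternal 𝓜)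
    {d : ι} {m : M} (hm : m ∈ 𝓜 d) :
    (LinearEquiv.ofBijective (DirectSum.coeLinearMap 𝓜) h).symm m =
      DirectSum.lof R ι (fun d => 𝓜 d) d ⟨m, hm⟩ := by
  rw [LinearEquiv.symm_apply_eq]
  exact (DirectSum.coeLinearMap_lof 𝓜 d ⟨m, hm⟩).symm

theorem DirectSum.IsInternal.exists_lift_tensorProduct (hM : DirectSum.IsInternal 𝓜)
    (hN : DirectSum.IsInternal 𝓝) (B : ∀ d e, 𝓜 d →ₗ[R] 𝓝 e →ₗ[R] P) :
    ∃ f : M ⊗[R] N →ₗ[R] P, ∀ d e (m : 𝓜 d) (n : 𝓝 e), f ((m : M) ⊗ₜ (n : N)) = B d e m n := by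
  let B' : (⨁ d, 𝓜 d) →ₗ[R] (⨁ e, 𝓝 e) →ₗ[R] P :=
    DirectSum.toModule R ι _ fun d => (DirectSum.toModule R ι _ fun e => (B d e).flip).flip
  let eM := (LinearEquiv.ofBijective (DirectSum.coeLinearMap 𝓜) hM).symm
  let eN := (LinearEquiv.ofBijective (DirectSum.coeLinearMap 𝓝) hN).symm
  refine ⟨lift (B'.compl₁₂ eM.toLinearMap eN.toLinearMap), fun d e m n => ?_⟩
  simp [B', eM, eN, hM.symm_ofBijective_coeLinearMap_of_mem m.2,
    hN.symm_ofBijective_coeLinearMap_of_mem n.2]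

theorem DirectSum.IsInternal.span_iUnion_eq_top (h : DirectSum.IsInternal 𝓜) :
    Submodule.span R (⋃ d, (𝓜 d : Set M)) = ⊤ := by
  rw [← Submodule.iSup_eq_span, h.submodule_iSup_eq_top]

theorem DirectSum.IsInternal.tensorProduct_ext (hM : DirectSum.IsInternal 𝓜)
    (hN : DirectSum.IsInternal 𝓝) {f g : M ⊗[R] N →ₗ[R] P}
    (h : ∀ d e, ∀ m ∈ 𝓜 d, ∀ n ∈ 𝓝 e, f (m ⊗ₜ n) = g (m ⊗ₜ n)) : f = g := by
  refine TensorProduct.ext <| LinearMap.ext_on hM.span_iUnion_eq_top ?_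
  rintro m ⟨-, ⟨d, rfl⟩, hm⟩
  refine LinearMap.ext_on hN.span_iUnion_eq_top ?_
  rintro n ⟨-, ⟨e, rfl⟩, hn⟩
  exact h d e m hm n hn

variable (𝓜 𝓝) in
def IsTwistedFlip (c : ι → ι → R) (τ : M ⊗[R] N →ₗ[R] N ⊗[R] M) : Prop :=
  ∀ d e, ∀ m ∈ 𝓜 d, ∀ n ∈ 𝓝 e, τ (m ⊗ₜ n) = c d e • (n ⊗ₜ m)

theorem exists_isTwistedFlip (hM : DirectSum.IsInternal 𝓜) (hN : DirectSum.IsInternal 𝓝)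
    (c : ι → ι → R) : ∃ τ, IsTwistedFlip 𝓜 𝓝 c τ := by
  obtain ⟨τ, hτ⟩ := hM.exists_lift_tensorProduct hN fun d e =>
    c d e • (TensorProduct.mk R N M).flip.compl₁₂ (𝓜 d).subtype (𝓝 e).subtype
  exact ⟨τ, fun d e m hm n hn => hτ d e ⟨m, hm⟩ ⟨n, hn⟩⟩

namespace IsTwistedFlip

variable {c c' : ι → ι → R} {τ σ : M ⊗[R] N →ₗ[R] N ⊗[R] M} {τ' : N ⊗[R] M →ₗ[R] M ⊗[R] N}

theorem unique (hM : DirectSum.IsInternal 𝓜) (hN : DirectSum.IsInternal 𝓝)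
    (hτ : IsTwistedFlip 𝓜 𝓝 c τ) (hσ : IsTwistedFlip 𝓜 𝓝 c σ) : τ = σ :=
  hM.tensorProduct_ext hN fun d e m hm n hn => by rw [hτ d e m hm n hn, hσ d e m hm n hn]

theorem comp_eq_id (hM : DirectSum.IsInternal 𝓜) (hN : DirectSum.IsInternal 𝓝)
    (hc : ∀ d e, c d e * c' e d = 1) (hτ : IsTwistedFlip 𝓜 𝓝 c τ)
    (hτ' : IsTwistedFlip 𝓝 𝓜 c' τ') : τ'.comp τ = LinearMap.id :=
  hM.tensorProduct_ext hN fun d e m hm n hn => by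
    rw [LinearMap.comp_apply, hτ d e m hm n hn, map_smul, hτ' e d n hn m hm, smul_smul,
      hc, one_smul, LinearMap.id_apply]

theorem bijective (hM : DirectSum.IsInternal 𝓜) (hN : DirectSum.IsInternal 𝓝)
    (hc : ∀ d e, IsUnit (c d e)) (hτ : IsTwistedFlip 𝓜 𝓝 c τ) : Function.Bijective τ := by
  obtain ⟨σ, hσ⟩ := exists_isTwistedFlip hN hM fun e d => ((hc d e).unit⁻¹ : Rˣ)
  have hστ := hτ.comp_eq_id hM hN (fun d e => (hc d e).mul_val_inv) hσ
  have hτσ := hσ.comp_eq_id hN hM (fun e d => (hc d e).val_inv_mul) hτ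
  exact Function.bijective_iff_has_inverse.mpr
    ⟨σ, fun x => LinearMap.congr_fun hστ x, fun x => LinearMap.congr_fun hτσ x⟩

end IsTwistedFlip

end GradedTensor

theorem Xu_sq : Xu ^ 2 = 1 := by
  refine Units.ext ?_
  simp [Xu, gunit, sq, AddMonoidAlgebra.single_mul_single, AddMonoidAlgebra.one_def]
  rfl

theorem Yu_sq : Yu ^ 2 = 1 := by
  refine Units.ext ?_
  simp [Yu, gunit, sq, AddMonoidAlgebra.single_mul_single, AddMonoidAlgebra.one_def]
  rfl

theorem lam_mul_lam (d e : ℤ × ℤ) : lam d e * lam e d = 1 := by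
  simp only [lam, mul_mul_mul_comm, ← zpow_add]
  rw [show d.1 * e.1 + e.1 * d.1 = 2 * (d.1 * e.1) by ring,
    show d.2 * e.2 + e.2 * d.2 = 2 * (d.2 * e.2) by ring,
    show d.1 * e.2 - e.1 * d.2 + (e.1 * d.2 - d.1 * e.2) = 0 by ring,
    zpow_mul Xu 2, zpow_mul Yu 2, zpow_ofNat, zpow_ofNat, Xu_sq, Yu_sq]
  simp

/-- For ℤ×ℤ-graded R-modules M and N there is a unique R-linear map
τ_{M,N} : M⊗N → N⊗M with τ(m⊗n) = λ(deg m, deg n)·(n⊗m) for homogeneous m, n;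
moreover τ_{M,N} is an isomorphism, with τ_{N,M} ∘ τ_{M,N} = id. -/
theorem stmt8 {M N : Type}
    [AddCommGroup M] [Module RR M] [AddCommGroup N] [Module RR N]
    (𝓜 : ℤ × ℤ → Submodule RR M) (𝓝 : ℤ × ℤ → Submodule RR N)
    (hM : DirectSum.IsInternal 𝓜) (hN : DirectSum.IsInternal 𝓝) :
    (∃! τ : M ⊗[RR] N →ₗ[RR] N ⊗[RR] M, IsSymmetryMap 𝓜 𝓝 τ) ∧
    ∀ (τ : M ⊗[RR] N →ₗ[RR] N ⊗[RR] M) (τ' : N ⊗[RR] M →ₗ[RR] M ⊗[RR] N),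
      IsSymmetryMap 𝓜 𝓝 τ → IsSymmetryMap 𝓝 𝓜 τ' →
      Function.Bijective τ ∧ τ'.comp τ = LinearMap.id := by
  let c : ℤ × ℤ → ℤ × ℤ → RR := fun d e => lam d e
  have hc : ∀ d e, c d e * c e d = 1 := fun d e => by
    rw [← Units.val_mul, lam_mul_lam, Units.val_one]
  obtain ⟨τ₀, hτ₀⟩ := exists_isTwistedFlip hM hN c
  refine ⟨⟨τ₀, hτ₀, fun τ hτ => IsTwistedFlip.unique hM hN (c := c) hτ hτ₀⟩,
    fun τ τ' hτ hτ' => ⟨?_, IsTwistedFlip.comp_eq_id hM hN hc hτ hτ'⟩⟩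
  exact IsTwistedFlip.bijective hM hN (c := c) (fun d e => (lam d e).isUnit) hτ

end Chrono
end

section
/- Fix k ≥ 1 and a function ε : {1,…,k} → {+,−}. In the monoid D = (ℤ×ℤ) × ((ℤ/2)×ℤ) with operation ((α₁,β₁),s₁) ⊛ ((α₂,β₂),s₂) = ((α₁+α₂,β₁+β₂), s₁+s₂+β₁(α₂−β₂)·(1,1)), assign δ(i) := ((1,0),(0,0)) if ε(i) = + and δ(i) := ((0,−1),(1,−1)) if ε(i) = −. Then the (ℤ/2)×ℤ-component of the product δ(k) ⊛ δ(k−1) ⊛ ⋯ ⊛ δ(1) equals (a mod 2, a), where a = −Σ_{i : ε(i) = −} i. -/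
open scoped TensorProduct

noncomputable section Chrono

/-- The binary operation ⊛ on D = (ℤ×ℤ) × ((ℤ/2)×ℤ):
((α₁,β₁),s₁) ⊛ ((α₂,β₂),s₂) = ((α₁+α₂,β₁+β₂), s₁+s₂+β₁·(α₂−β₂)·(1,1)). -/
def Dop (x y : (ℤ × ℤ) × (ZMod 2 × ℤ)) : (ℤ × ℤ) × (ZMod 2 × ℤ) :=
  (x.1 + y.1, x.2 + y.2 + (x.1.2 * (y.1.1 - y.1.2)) • (((1 : ZMod 2), (1 : ℤ)) : ZMod 2 × ℤ))

/-- δ(i): the bidegree and splitting degree of v₊ (if ε i = false, i.e. ε(i) = +)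
or of v₋ (if ε i = true, i.e. ε(i) = −). -/
def delta12 (e : Bool) : (ℤ × ℤ) × (ZMod 2 × ℤ) :=
  if e then ((0, -1), (1, -1)) else ((1, 0), (0, 0))


/-- `a ↦ (a mod 2, a)`, whose values are the multiples of `(1,1)` in `(ℤ/2)×ℤ`. -/
def zdiag : ℤ →+ ZMod 2 × ℤ := (Int.castAddHom (ZMod 2)).prod (AddMonoidHom.id ℤ)

@[simp]
lemma zdiag_apply (a : ℤ) : zdiag a = ((a : ZMod 2), a) := rfl

lemma zsmul_one_one_eq_zdiag (n : ℤ) : n • (((1 : ZMod 2), (1 : ℤ)) : ZMod 2 × ℤ) = zdiag n := by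
  simp

def weight (x : (ℤ × ℤ) × (ZMod 2 × ℤ)) : ℤ := x.1.1 - x.1.2

lemma weight_Dop (x y : (ℤ × ℤ) × (ZMod 2 × ℤ)) :
    weight (Dop x y) = weight x + weight y := by
  simp only [weight, Dop, Prod.fst_add, Prod.snd_add]
  ring

lemma Dop_snd (x y : (ℤ × ℤ) × (ZMod 2 × ℤ)) :
    (Dop x y).2 = x.2 + y.2 + zdiag (x.1.2 * weight y) :=
  congrArg (x.2 + y.2 + ·) (zsmul_one_one_eq_zdiag _)

lemma weight_delta12 (e : Bool) : weight (delta12 e) = 1 := by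
  cases e <;> simp [weight, delta12]

lemma delta12_fst_snd (e : Bool) : (delta12 e).1.2 = if e then -1 else 0 := by
  cases e <;> simp [delta12]

lemma delta12_snd (e : Bool) : (delta12 e).2 = zdiag (if e then -1 else 0) := by
  cases e <;> simp [delta12]

/-- The product `δ(k) ⊛ δ(k-1) ⊛ ⋯ ⊛ δ(1)`. -/
def deltaProd (ε : ℕ → Bool) (k : ℕ) : (ℤ × ℤ) × (ZMod 2 × ℤ) :=
  ((List.range k).map (fun j => delta12 (ε (k - j)))).foldr Dop ((0, 0), (0, 0))

lemma deltaProd_succ (ε : ℕ → Bool) (k : ℕ) :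
    deltaProd ε (k + 1) = Dop (delta12 (ε (k + 1))) (deltaProd ε k) := by
  simp only [deltaProd, List.range_succ_eq_map, List.map_cons, List.foldr_cons, List.map_map,
    Nat.sub_zero]
  congr 3
  funext j
  simp

lemma weight_deltaProd (ε : ℕ → Bool) (k : ℕ) : weight (deltaProd ε k) = k := by
  induction k with
  | zero => rfl
  | succ k ih => rw [deltaProd_succ, weight_Dop, ih, weight_delta12]; push_cast; ring

/-- Each factor `v₋` contributes `(1,-1)` from its own splitting degree and `-(i-1)·(1,1)` from
crossing the `i - 1` factors to its right, each of weight `1`: together `-i·(1,1)`. -/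
lemma deltaProd_snd (ε : ℕ → Bool) (k : ℕ) :
    (deltaProd ε k).2 = zdiag (-∑ i ∈ Finset.Icc 1 k, if ε i then (i : ℤ) else 0) := by
  induction k with
  | zero => simp [deltaProd]
  | succ k ih =>
    rw [deltaProd_succ, Dop_snd, ih, delta12_snd, delta12_fst_snd, weight_deltaProd,
      ← map_add, ← map_add, Finset.sum_Icc_succ_top (Nat.le_add_left 1 k)]
    congr 1
    cases ε (k + 1) <;> simp; ring

theorem stmt12_general (k : ℕ) (ε : ℕ → Bool) :
    (((List.range k).map (fun j => delta12 (ε (k - j)))).foldr Dop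
        (((0, 0), (0, 0)) : (ℤ × ℤ) × (ZMod 2 × ℤ))).2
      = ((((- ∑ i ∈ Finset.Icc 1 k, if ε i then (i : ℤ) else 0) : ℤ) : ZMod 2),
          (- ∑ i ∈ Finset.Icc 1 k, if ε i then (i : ℤ) else 0 : ℤ)) :=
  deltaProd_snd ε k

/-- For k ≥ 1 and ε : {1,…,k} → {+,−} (here `true` = −), the (ℤ/2)×ℤ-component
of the product δ(k) ⊛ δ(k−1) ⊛ ⋯ ⊛ δ(1) in the monoid D equals (a mod 2, a), where
a = −Σ_{i : ε(i) = −} i. -/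
theorem stmt12 (k : ℕ) (hk : 1 ≤ k) (ε : ℕ → Bool) :
    (((List.range k).map (fun j => delta12 (ε (k - j)))).foldr Dop
        (((0, 0), (0, 0)) : (ℤ × ℤ) × (ZMod 2 × ℤ))).2
      = ((((- ∑ i ∈ Finset.Icc 1 k, if ε i then (i : ℤ) else 0) : ℤ) : ZMod 2),
          (- ∑ i ∈ Finset.Icc 1 k, if ε i then (i : ℤ) else 0 : ℤ)) :=
  stmt12_general k ε

end Chrono
end

section
/- For all integers m₁, s₁, m₂, s₂, a₁, b₁, a₂, b₂ satisfying m₁ + a₁ = s₁ + b₁ and m₂ + a₂ = s₂ + b₂, the following identity holds in (ℤ/2)×ℤ: ((b₂−a₂)·s₁ + (a₁−b₁)·m₂ mod 2, (b₂−a₂)·s₁ + (a₁−b₁)·s₂) = (s₁s₂ + m₁m₂ mod 2, s₁m₂ − m₁s₂); moreover the right-hand side equals the splitting degree of the monomial X^{m₁m₂} Y^{s₁s₂} Z^{m₁s₂−s₁m₂} in R. -/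
open scoped TensorProduct

noncomputable section Chrono

/-- For integers with m₁+a₁ = s₁+b₁ and m₂+a₂ = s₂+b₂, in (ℤ/2)×ℤ:
((b₂−a₂)s₁+(a₁−b₁)m₂ mod 2, (b₂−a₂)s₁+(a₁−b₁)s₂) = (s₁s₂+m₁m₂ mod 2, s₁m₂−m₁s₂);
moreover the right-hand side is the splitting degree of X^{m₁m₂} Y^{s₁s₂} Z^{m₁s₂−s₁m₂}
in R. -/
theorem stmt13 (m₁ s₁ m₂ s₂ a₁ b₁ a₂ b₂ : ℤ)
    (h₁ : m₁ + a₁ = s₁ + b₁) (h₂ : m₂ + a₂ = s₂ + b₂) :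
    (((((b₂ - a₂) * s₁ + (a₁ - b₁) * m₂ : ℤ) : ZMod 2),
        (b₂ - a₂) * s₁ + (a₁ - b₁) * s₂) : ZMod 2 × ℤ)
      = (((((s₁ * s₂ + m₁ * m₂ : ℤ)) : ZMod 2), s₁ * m₂ - m₁ * s₂) : ZMod 2 × ℤ) ∧
    ((Xu ^ (m₁ * m₂) * Yu ^ (s₁ * s₂) * Zu ^ (m₁ * s₂ - s₁ * m₂) : RRˣ) : RR)
      ∈ Rcomp ((((s₁ * s₂ + m₁ * m₂ : ℤ) : ZMod 2)), s₁ * m₂ - m₁ * s₂) := by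
  constructor
  · have e1 : a₁ - b₁ = s₁ - m₁ := by linarith
    have e2 : b₂ - a₂ = m₂ - s₂ := by linarith
    rw [e1, e2]
    refine Prod.ext ?_ (by ring)
    show (((m₂ - s₂) * s₁ + (s₁ - m₁) * m₂ : ℤ) : ZMod 2) = ((s₁ * s₂ + m₁ * m₂ : ℤ) : ZMod 2)
    rw [ZMod.intCast_eq_intCast_iff]
    have key : (m₂ - s₂) * s₁ + (s₁ - m₁) * m₂ = s₁ * s₂ + m₁ * m₂ + 2 * (s₁ * m₂ - s₁ * s₂ - m₁ * m₂) := by ring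
    unfold Int.ModEq
    omega
  · apply Submodule.subset_span
    exact ⟨m₁ * m₂, s₁ * s₂, m₁ * s₂ - s₁ * m₂, by push_cast; ring, by ring, rfl⟩

end Chrono
end

section
/- Let σ : R → R be the unique ring automorphism with σ(X) = Y, σ(Y) = X and σ(Z) = Z. There is a σ-semilinear bijection φ : A → A* (i.e., φ is additive, φ(r·u) = σ(r)·φ(u), and bijective) determined by φ(v₊) = v₋* and φ(v₋) = v₊*, and it intertwines the operations of A with the dual operations of A*: for all i, j ∈ {+,−}, φ(μ(v_i ⊗ v_j)) = Δ*(φ(v_i) ⊗ φ(v_j)), and, writing Δ(v_i) = Σ_t r_t · (v_{a_t} ⊗ v_{b_t}) with r_t ∈ R, μ*(φ(v_i)) = Σ_t σ(r_t) · (φ(v_{a_t}) ⊗ φ(v_{b_t})). -/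
open scoped TensorProduct

noncomputable section Chrono

/-- The basis vector of A indexed by a sign (`true` = +, `false` = −). -/
def vb (i : Bool) : A := if i then vp else vm
/-- The dual basis vector of A* indexed by a sign. -/
def vbd (i : Bool) : Module.Dual RR A := if i then vpd else vmd

/-! The isomorphism sends `u = a v₊ + b v₋` to `σ(b) v₊* + σ(a) v₋*`. All the claimed identities
are R-linear (resp. σ-semilinear) in each argument, so it suffices to check them on basis
vectors, where they compare structure constants of `μ` and `Δ`. The only constant that is not
`0` or `1` on either side is `XZ` against `YZ`, and `σ(XZ) = YZ` is exactly what forces `σ` to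
exchange `X` and `Y`. -/

def swapXYAddEquiv : GG ≃+ GG where
  toFun g := (g.2.1, g.1, g.2.2)
  invFun g := (g.2.1, g.1, g.2.2)
  left_inv _ := rfl
  right_inv _ := rfl
  map_add' _ _ := rfl

def swapXY : RR ≃+* RR := (AddMonoidAlgebra.domCongr ℤ ℤ swapXYAddEquiv).toRingEquiv

theorem swapXY_single (g : GG) :
    swapXY (AddMonoidAlgebra.single g 1) = AddMonoidAlgebra.single (swapXYAddEquiv g) 1 :=
  AddMonoidAlgebra.domCongr_single (R := ℤ) (A := ℤ) _ g 1

@[simp] theorem swapXY_X : swapXY X = Y := swapXY_single (1, 0, 0)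
@[simp] theorem swapXY_Y : swapXY Y = X := swapXY_single (0, 1, 0)
@[simp] theorem swapXY_Z : swapXY Z = Z := swapXY_single (0, 0, 1)

instance : RingHomInvPair (swapXY : RR →+* RR) (swapXY.symm : RR →+* RR) :=
  .of_ringEquiv swapXY

instance : RingHomInvPair (swapXY.symm : RR →+* RR) (swapXY : RR →+* RR) :=
  .of_ringEquiv_symm swapXY

@[simp] theorem vpd_vp : vpd vp = 1 := rfl
@[simp] theorem vpd_vm : vpd vm = 0 := rfl
@[simp] theorem vmd_vp : vmd vp = 0 := rfl
@[simp] theorem vmd_vm : vmd vm = 1 := rfl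

theorem dual_ext {f g : Module.Dual RR A} (hp : f vp = g vp) (hm : f vm = g vm) : f = g :=
  LinearMap.prod_ext (LinearMap.ext_ring hp) (LinearMap.ext_ring hm)

theorem tensor_dual_ext {f g : A ⊗[RR] A →ₗ[RR] RR}
    (h : ∀ i j, f (vb i ⊗ₜ vb j) = g (vb i ⊗ₜ vb j)) : f = g := by
  refine TensorProduct.ext (LinearMap.prod_ext ?_ ?_) <;> apply LinearMap.ext_ring <;>
    refine LinearMap.prod_ext ?_ ?_ <;> apply LinearMap.ext_ring
  exacts [h true true, h true false, h false true, h false false]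

@[simp] theorem mu_vp_vp : mu (vp ⊗ₜ vp) = vp := by simp [mu, vp]
@[simp] theorem mu_vp_vm : mu (vp ⊗ₜ vm) = vm := by simp [mu, vp, vm]
@[simp] theorem mu_vm_vp : mu (vm ⊗ₜ vp) = (X * Z) • vm := by simp [mu, vp, vm]
@[simp] theorem mu_vm_vm : mu (vm ⊗ₜ vm) = 0 := by simp [mu, vm]

@[simp] theorem Delta_vp : Delta vp = vm ⊗ₜ vp + (Y * Z) • (vp ⊗ₜ vm) := by simp [Delta, vp]
@[simp] theorem Delta_vm : Delta vm = vm ⊗ₜ vm := by simp [Delta, vm]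

@[simp] theorem pairF_tmul (f g : Module.Dual RR A) (m n : A) :
    pairF f g (m ⊗ₜ n) = f m * g n := rfl

def dualEquiv : A ≃ₛₗ[(swapXY : RR →+* RR)] Module.Dual RR A where
  toFun u := swapXY u.2 • vpd + swapXY u.1 • vmd
  invFun f := (swapXY.symm (f vm), swapXY.symm (f vp))
  map_add' u v := by simp only [Prod.fst_add, Prod.snd_add, map_add, add_smul]; abel
  map_smul' r u := by simp [mul_smul, smul_add]
  left_inv u := by simp
  right_inv f := dual_ext (by simp) (by simp)

@[simp] theorem dualEquiv_vp : dualEquiv vp = vmd := by simp [dualEquiv, vp]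
@[simp] theorem dualEquiv_vm : dualEquiv vm = vpd := by simp [dualEquiv, vm]

theorem dualEquiv_mu_eq_comp_Delta (i j : Bool) :
    dualEquiv (mu (vb i ⊗ₜ vb j)) = (pairF (dualEquiv (vb i)) (dualEquiv (vb j))).comp Delta := by
  cases i <;> cases j <;> apply dual_ext <;> simp [vb, map_smulₛₗ]

theorem vmd_comp_mu : vmd.comp mu = pairF vpd vmd + swapXY (Y * Z) • pairF vmd vpd := by
  refine tensor_dual_ext fun i j => ?_
  cases i <;> cases j <;> simp [vb]

theorem vpd_comp_mu : vpd.comp mu = pairF vpd vpd := by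
  refine tensor_dual_ext fun i j => ?_
  cases i <;> cases j <;> simp [vb]

/-- Let σ : R → R be the (unique) ring automorphism with σ(X) = Y,
σ(Y) = X, σ(Z) = Z. There is a σ-semilinear bijection φ : A → A* with φ(v₊) = v₋*,
φ(v₋) = v₊*, intertwining μ with Δ* and Δ with μ*: for all i, j ∈ {+,−},
φ(μ(v_i ⊗ v_j)) = Δ*(φ(v_i) ⊗ φ(v_j)), and (applying σ to the structure constants of Δ)
μ*(φ(v₊)) = φ(v₋)⊗φ(v₊) + σ(YZ)·φ(v₊)⊗φ(v₋) and μ*(φ(v₋)) = φ(v₋)⊗φ(v₋). -/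
theorem stmt14 :
    ∃ σ : RR ≃+* RR, σ X = Y ∧ σ Y = X ∧ σ Z = Z ∧
      ∃ φ : A → Module.Dual RR A,
        (∀ u v : A, φ (u + v) = φ u + φ v) ∧
        (∀ (r : RR) (u : A), φ (r • u) = σ r • φ u) ∧
        Function.Bijective φ ∧
        φ vp = vmd ∧ φ vm = vpd ∧
        (∀ i j : Bool,
          φ (mu (vb i ⊗ₜ[RR] vb j)) = (pairF (φ (vb i)) (φ (vb j))).comp Delta) ∧
        ((φ vp).comp mu = pairF (φ vm) (φ vp) + σ (Y * Z) • pairF (φ vp) (φ vm)) ∧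
        ((φ vm).comp mu = pairF (φ vm) (φ vm)) := by
  refine ⟨swapXY, swapXY_X, swapXY_Y, swapXY_Z, dualEquiv, map_add dualEquiv,
    map_smulₛₗ dualEquiv, dualEquiv.bijective, dualEquiv_vp, dualEquiv_vm,
    dualEquiv_mu_eq_comp_Delta, ?_, ?_⟩
  · simpa using vmd_comp_mu
  · simpa using vpd_comp_mu

end Chrono
end

section
/- The evaluation of the composite corresponding to the torus equals Z·(X+Y): explicitly, ε(μ(Δ(v₊))) = (X+Y)·Z in R; equivalently, ε ∘ μ ∘ Δ ∘ η = (X+Y)Z · id_R. -/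
open scoped TensorProduct

noncomputable section Chrono

/-- The evaluation of the composite corresponding to the torus equals
Z·(X+Y): ε(μ(Δ(v₊))) = (X+Y)·Z; equivalently ε ∘ μ ∘ Δ ∘ η = (X+Y)Z · id_R. -/
theorem stmt19 :
    eps (mu (Delta vp)) = (X + Y) * Z ∧
    eps.comp (mu.comp (Delta.comp eta)) = ((X + Y) * Z) • (LinearMap.id : RR →ₗ[RR] RR) := by
  have h : eps (mu (Delta vp)) = (X + Y) * Z := by
    simp [eps, mu, Delta, vp, vm]
    ring
  refine ⟨h, ?_⟩
  apply LinearMap.ext_ring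
  simp only [LinearMap.comp_apply, LinearMap.smul_apply, LinearMap.id_apply, smul_eq_mul,
    mul_one]
  have heta : eta (1:RR) = vp := by simp [eta]
  rw [heta, h]

end Chrono
end
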